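/- Let Q ⊂ ℤ^d be a finite set and let Λ(Q) := {m − k : m ∈ Q, k ∈ Q}. Let p be a prime and a a natural number with 1 ≤ a < p such that for every nonzero m ∈ Λ(Q) one has m₁ + a·m₂ + ⋯ + a^{d−1}·m_d ≢ 0 (mod p). Define ξ^ν ∈ 𝕋^d by ξ^ν_j := 2π·{ν·a^{j−1}/p} for ν = 1, …, p. Then for every t ∈ 𝒯(Q) one has ‖t‖₂² = (1/p)·∑_{ν=1}^p |t(ξ^ν)|². -/

import Mathlib

open MeasureTheory Real Finset

noncomputable section

/-- The cube `[0, 2π)^d` representing the torus `𝕋^d`. -/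
def torusCube (d : ℕ) : Set (Fin d → ℝ) := Set.univ.pi fun _ => Set.Ico 0 (2 * π)

/-- The trigonometric polynomial with frequencies in `Q` and coefficients `c`. -/
def trigSum {d : ℕ} (Q : Finset (Fin d → ℤ)) (c : (Fin d → ℤ) → ℂ) : (Fin d → ℝ) → ℂ :=
  fun x => ∑ k ∈ Q, c k * Complex.exp (Complex.I * ∑ j, (k j : ℂ) * (x j : ℂ))

/-- `‖f‖_q^q = (2π)^{-d} ∫_{𝕋^d} |f(x)|^q dx`. -/
def lqNormPow (d : ℕ) (q : ℝ) (f : (Fin d → ℝ) → ℂ) : ℝ :=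
  ((2 * π) ^ d)⁻¹ * ∫ x in torusCube d, ‖f x‖ ^ q

open Classical in
/-- The step hyperbolic cross `Q_n`. -/
def hyperCross (d n : ℕ) : Finset (Fin d → ℤ) :=
  (Fintype.piFinset fun _ : Fin d => Finset.Icc (-(2 ^ n : ℤ)) (2 ^ n)).filter
    fun k => ∃ s : Fin d → ℕ, (∑ j, s j) ≤ n ∧
      ∀ j, ((2 ^ s j / 2 : ℕ) : ℤ) ≤ |k j| ∧ |k j| < 2 ^ s j

/-- sup-norm over the torus. -/
def supNorm (d : ℕ) (f : (Fin d → ℝ) → ℂ) : ℝ := ⨆ x : Fin d → ℝ, ‖f x‖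

/-- entropy number `ε_k(A, L_∞)` with centers in `A`. -/
def entropyNum (d : ℕ) (A : Set ((Fin d → ℝ) → ℂ)) (k : ℕ) : ℝ :=
  sInf {ε : ℝ | ∃ y : Fin (2 ^ k) → ((Fin d → ℝ) → ℂ), (∀ j, y j ∈ A) ∧
    ∀ f ∈ A, ∃ j, ∀ x, ‖f x - y j x‖ ≤ ε}

/-- unit `L_q`-ball of `𝒯(Q_n)`. -/
def trigBall (d : ℕ) (Q : Finset (Fin d → ℤ)) (q : ℝ) : Set ((Fin d → ℝ) → ℂ) :=
  {f | ∃ c : (Fin d → ℤ) → ℂ, f = trigSum Q c ∧ (lqNormPow d q f) ^ (1 / q) ≤ 1}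

/-- the points `ξ^ν` built from `a` and `p`. -/
def xiPoint (d p a : ℕ) (ν : ℕ) : Fin d → ℝ :=
  fun j => 2 * π * Int.fract ((ν * a ^ (j : ℕ) : ℝ) / p)

/-- Dirichlet kernel of `Q`. -/
def dirKernel {d : ℕ} (Q : Finset (Fin d → ℤ)) : (Fin d → ℝ) → ℂ :=
  fun x => ∑ k ∈ Q, Complex.exp (Complex.I * ∑ j, (k j : ℂ) * (x j : ℂ))

/-- `Λ(Q) = {m - k : m ∈ Q, k ∈ Q}`. -/
def diffSet {d : ℕ} (Q : Finset (Fin d → ℤ)) : Finset (Fin d → ℤ) :=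
  (Q ×ˢ Q).image fun z => z.1 - z.2

/-!
Expanding `|t(x)|² = ∑_{k,m ∈ Q} c_k c̄_m e^{i(k-m,x)}`, both sides become averages of characters
`e^{i(n,x)}` with `n ∈ Λ(Q)`. Over the torus such a character averages to `[n = 0]`. At `ξ^ν` it
equals `ζ^{ν S(n)}` with `ζ = e^{2πi/p}` and `S(n) = n₁ + a n₂ + ⋯ + a^{d-1} n_d`, so its average
over `ν = 1, …, p` is `[p ∣ S(n)]`, which for `n ∈ Λ(Q)` is again `[n = 0]` by hypothesis.
-/

open ComplexConjugate

def torusExp {d : ℕ} (n : Fin d → ℤ) (x : Fin d → ℝ) : ℂ :=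
  Complex.exp (Complex.I * ∑ j, (n j : ℂ) * (x j : ℂ))

lemma trigSum_apply {d : ℕ} (Q : Finset (Fin d → ℤ)) (c : (Fin d → ℤ) → ℂ) (x : Fin d → ℝ) :
    trigSum Q c x = ∑ k ∈ Q, c k * torusExp k x :=
  rfl

lemma torusExp_eq_prod {d : ℕ} (n : Fin d → ℤ) (x : Fin d → ℝ) :
    torusExp n x = ∏ j, Complex.exp (Complex.I * n j * x j) := by
  rw [torusExp, Finset.mul_sum, Complex.exp_sum]
  simp only [mul_assoc]

lemma torusExp_sub {d : ℕ} (k m : Fin d → ℤ) (x : Fin d → ℝ) :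
    torusExp (k - m) x = torusExp k x * conj (torusExp m x) := by
  simp only [torusExp, ← Complex.exp_conj, map_mul, map_sum, Complex.conj_I, Complex.conj_ofReal,
    map_intCast, ← Complex.exp_add, Pi.sub_apply, Int.cast_sub, sub_mul, Finset.sum_sub_distrib]
  ring_nf

lemma ofReal_norm_sq_trigSum {d : ℕ} (Q : Finset (Fin d → ℤ)) (c : (Fin d → ℤ) → ℂ)
    (x : Fin d → ℝ) :
    ((‖trigSum Q c x‖ ^ 2 : ℝ) : ℂ) =
      ∑ z ∈ Q ×ˢ Q, c z.1 * conj (c z.2) * torusExp (z.1 - z.2) x := by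
  rw [Complex.ofReal_pow, ← Complex.mul_conj', trigSum_apply, map_sum, Finset.sum_mul_sum,
    ← Finset.sum_product']
  refine Finset.sum_congr rfl fun z _ => ?_
  rw [torusExp_sub, map_mul]
  ring

/-- Both averages of `|t|²` have this form, `w k m` being the average of `e^{i(k-m,x)}`. -/
lemma sum_mul_conj_mul_eq_of_offDiag_eq_zero {ι : Type*} [DecidableEq ι] (s : Finset ι)
    (c : ι → ℂ) (w : ι → ι → ℂ) (C : ℂ) (hdiag : ∀ k ∈ s, w k k = C)
    (hoff : ∀ k ∈ s, ∀ m ∈ s, k ≠ m → w k m = 0) :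
    ∑ z ∈ s ×ˢ s, c z.1 * conj (c z.2) * w z.1 z.2 = C * ((∑ k ∈ s, ‖c k‖ ^ 2 : ℝ) : ℂ) := by
  rw [Finset.sum_product, Complex.ofReal_sum, Finset.mul_sum]
  refine Finset.sum_congr rfl fun k hk => ?_
  rw [Finset.sum_eq_single_of_mem k hk fun m hm hmk => by rw [hoff k hk m hm hmk.symm, mul_zero],
    hdiag k hk, Complex.mul_conj', Complex.ofReal_pow, mul_comm]

lemma integral_Ico_exp_I_mul_int (n : ℤ) :
    ∫ x in Set.Ico 0 (2 * π), Complex.exp (Complex.I * n * x) =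
      if n = 0 then (2 * π : ℂ) else 0 := by
  rw [setIntegral_congr_set Ico_ae_eq_Ioc, ← intervalIntegral.integral_of_le (by positivity)]
  split_ifs with hn
  · simp [hn]
  · have hIn : Complex.I * n ≠ 0 := by simp [hn]
    rw [integral_exp_mul_complex hIn, show Complex.I * n * (2 * π : ℝ) = n * (2 * π * Complex.I)
      by push_cast; ring, Complex.exp_int_mul_two_pi_mul_I]
    simp

lemma integral_torusCube_torusExp {d : ℕ} (n : Fin d → ℤ) :
    ∫ x in torusCube d, torusExp n x = if n = 0 then ((2 * π) ^ d : ℂ) else 0 := by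
  simp_rw [torusExp_eq_prod, torusCube, volume_pi, Measure.restrict_pi_pi,
    integral_fintype_prod_eq_prod (fun j (y : ℝ) => Complex.exp (Complex.I * n j * y)),
    integral_Ico_exp_I_mul_int, Finset.prod_ite_zero, Finset.prod_const, Finset.card_univ,
    Fintype.card_fin, funext_iff, Finset.mem_univ, true_implies, Pi.zero_apply]

lemma integrableOn_torusCube_torusExp {d : ℕ} (n : Fin d → ℤ) :
    IntegrableOn (torusExp n) (torusCube d) := by
  have hcont : Continuous (torusExp n) := by unfold torusExp; fun_prop
  have hcube : IsCompact (Set.univ.pi fun _ : Fin d => Set.Icc 0 (2 * π)) :=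
    isCompact_univ_pi fun _ => isCompact_Icc
  exact (hcont.continuousOn.integrableOn_compact hcube).mono_set
    (Set.pi_mono fun _ _ => Set.Ico_subset_Icc_self)

lemma integral_norm_sq_trigSum {d : ℕ} (Q : Finset (Fin d → ℤ)) (c : (Fin d → ℤ) → ℂ) :
    ∫ x in torusCube d, ‖trigSum Q c x‖ ^ 2 = (2 * π) ^ d * ∑ k ∈ Q, ‖c k‖ ^ 2 := by
  apply Complex.ofReal_injective
  calc ((∫ x in torusCube d, ‖trigSum Q c x‖ ^ 2 : ℝ) : ℂ)
      = ∑ z ∈ Q ×ˢ Q, c z.1 * conj (c z.2) * ∫ x in torusCube d, torusExp (z.1 - z.2) x := by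
        rw [← integral_complex_ofReal]
        simp_rw [ofReal_norm_sq_trigSum]
        rw [integral_finsetSum _ fun z _ => (integrableOn_torusCube_torusExp _).const_mul _]
        simp_rw [integral_const_mul]
    _ = _ := by
        rw [sum_mul_conj_mul_eq_of_offDiag_eq_zero Q c
          (fun k m => ∫ x in torusCube d, torusExp (k - m) x) ((2 * π) ^ d : ℂ)]
        · push_cast; rfl
        · intro k _
          rw [integral_torusCube_torusExp, if_pos (sub_self k)]
        · intro k _ m _ hkm
          rw [integral_torusCube_torusExp, if_neg (sub_ne_zero.mpr hkm)]

lemma lqNormPow_two_trigSum {d : ℕ} (Q : Finset (Fin d → ℤ)) (c : (Fin d → ℤ) → ℂ) :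
    lqNormPow d 2 (trigSum Q c) = ∑ k ∈ Q, ‖c k‖ ^ 2 := by
  simp_rw [lqNormPow, Real.rpow_two, integral_norm_sq_trigSum]
  field_simp

lemma IsPrimitiveRoot.sum_Icc_pow_zpow {K : Type*} [Field K] {ζ : K} {p : ℕ}
    (hζ : IsPrimitiveRoot ζ p) (S : ℤ) :
    ∑ ν ∈ Finset.Icc 1 p, (ζ ^ S) ^ ν = if (p : ℤ) ∣ S then (p : K) else 0 := by
  have hpow : (ζ ^ S) ^ p = 1 := by
    rw [← zpow_natCast, ← zpow_mul, mul_comm, zpow_mul, zpow_natCast, hζ.pow_eq_one, one_zpow]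
  rw [← Finset.Ico_add_one_right_eq_Icc, Finset.sum_Ico_eq_sum_range, Nat.add_sub_cancel]
  simp_rw [pow_add, pow_one, ← Finset.mul_sum]
  split_ifs with hS
  · simp [(hζ.zpow_eq_one_iff_dvd S).mpr hS]
  · rw [geom_sum_eq (mt (hζ.zpow_eq_one_iff_dvd S).mp hS), hpow, sub_self, zero_div, mul_zero]

/-- The exponent `(n, ξ^ν)` equals `2πν(n₁ + a n₂ + ⋯ + a^{d-1} n_d)/p` modulo `2πℤ`. -/
lemma torusExp_xiPoint {d p : ℕ} (a ν : ℕ) (n : Fin d → ℤ) :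
    torusExp n (xiPoint d p a ν) =
      (Complex.exp (2 * π * Complex.I / p) ^ ∑ j, n j * (a : ℤ) ^ (j : ℕ)) ^ ν := by
  have hexp : Complex.I * ∑ j, (n j : ℂ) * (xiPoint d p a ν j : ℂ) =
      ((ν * ∑ j, n j * (a : ℤ) ^ (j : ℕ) : ℤ) : ℂ) * (2 * π * Complex.I / p) +
        ((-∑ j, n j * ⌊(ν * a ^ (j : ℕ) : ℝ) / p⌋ : ℤ) : ℂ) * (2 * π * Complex.I) := by
    simp only [xiPoint, Int.fract]
    push_cast
    simp only [Finset.mul_sum, Finset.sum_mul, ← Finset.sum_neg_distrib, ← Finset.sum_add_distrib]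
    refine Finset.sum_congr rfl fun j _ => ?_
    field_simp
    ring
  rw [torusExp, hexp, Complex.exp_add, Complex.exp_int_mul_two_pi_mul_I, mul_one,
    Complex.exp_int_mul, ← zpow_natCast, ← zpow_mul, mul_comm (ν : ℤ)]

lemma sum_Icc_torusExp_xiPoint {d p : ℕ} (hp : p ≠ 0) (a : ℕ) (n : Fin d → ℤ) :
    ∑ ν ∈ Finset.Icc 1 p, torusExp n (xiPoint d p a ν) =
      if (p : ℤ) ∣ ∑ j, n j * (a : ℤ) ^ (j : ℕ) then (p : ℂ) else 0 := by
  simp_rw [torusExp_xiPoint]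
  exact (Complex.isPrimitiveRoot_exp p hp).sum_Icc_pow_zpow _

lemma sum_norm_sq_trigSum_xiPoint {d : ℕ} (Q : Finset (Fin d → ℤ)) {p : ℕ} (hp : p ≠ 0) (a : ℕ)
    (ha : ∀ mm ∈ diffSet Q, mm ≠ 0 → ¬ ((p : ℤ) ∣ ∑ j, mm j * (a : ℤ) ^ (j : ℕ)))
    (c : (Fin d → ℤ) → ℂ) :
    ∑ ν ∈ Finset.Icc 1 p, ‖trigSum Q c (xiPoint d p a ν)‖ ^ 2 = p * ∑ k ∈ Q, ‖c k‖ ^ 2 := by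
  apply Complex.ofReal_injective
  calc ((∑ ν ∈ Finset.Icc 1 p, ‖trigSum Q c (xiPoint d p a ν)‖ ^ 2 : ℝ) : ℂ)
      = ∑ z ∈ Q ×ˢ Q, c z.1 * conj (c z.2) *
          ∑ ν ∈ Finset.Icc 1 p, torusExp (z.1 - z.2) (xiPoint d p a ν) := by
        simp_rw [Complex.ofReal_sum, ofReal_norm_sq_trigSum, Finset.mul_sum]
        exact Finset.sum_comm
    _ = _ := by
        rw [sum_mul_conj_mul_eq_of_offDiag_eq_zero Q c
          (fun k m => ∑ ν ∈ Finset.Icc 1 p, torusExp (k - m) (xiPoint d p a ν)) (p : ℂ)]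
        · push_cast; rfl
        · intro k _
          simp [sum_Icc_torusExp_xiPoint hp]
        · intro k hk m hm hkm
          have hdiff : k - m ∈ diffSet Q := Finset.mem_image_of_mem _ (Finset.mk_mem_product hk hm)
          rw [sum_Icc_torusExp_xiPoint hp, if_neg (ha _ hdiff (sub_ne_zero.mpr hkm))]

theorem stmt12_general (d : ℕ) (Q : Finset (Fin d → ℤ)) (p : ℕ) (hp : p.Prime)
    (a : ℕ)
    (ha : ∀ mm ∈ diffSet Q, mm ≠ 0 → ¬ ((p : ℤ) ∣ ∑ j, mm j * (a : ℤ) ^ (j : ℕ))) :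
    ∀ c : (Fin d → ℤ) → ℂ,
      lqNormPow d 2 (trigSum Q c) =
        (1 / p) * ∑ ν ∈ Finset.Icc 1 p, ‖trigSum Q c (xiPoint d p a ν)‖ ^ 2 := by
  intro c
  have hp0 : (p : ℝ) ≠ 0 := by exact_mod_cast hp.ne_zero
  rw [lqNormPow_two_trigSum, sum_norm_sq_trigSum_xiPoint Q hp.ne_zero a ha, one_div,
    inv_mul_cancel_left₀ hp0]

theorem stmt12 (d : ℕ) (hd : 0 < d) (Q : Finset (Fin d → ℤ)) (p : ℕ) (hp : p.Prime)
    (a : ℕ) (ha1 : 1 ≤ a) (hap : a < p)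
    (ha : ∀ mm ∈ diffSet Q, mm ≠ 0 → ¬ ((p : ℤ) ∣ ∑ j, mm j * (a : ℤ) ^ (j : ℕ))) :
    ∀ c : (Fin d → ℤ) → ℂ,
      lqNormPow d 2 (trigSum Q c) =
        (1 / p) * ∑ ν ∈ Finset.Icc 1 p, ‖trigSum Q c (xiPoint d p a ν)‖ ^ 2 :=
  stmt12_general d Q p hp a ha

end
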